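/- Let E be a finite-dimensional real inner product space and f : E → ℝ a differentiable function that is bounded above and whose gradient ∇f is L-Lipschitz on E for some L ≥ 0 and uniformly bounded, i.e. ‖∇f(x)‖ ≤ G for all x and some G ≥ 0. Let α : ℕ → ℝ satisfy α(k) > 0 for all k, Σ_{k=0}^∞ α(k) = ∞, and Σ_{k=0}^∞ α(k)² < ∞. Let e : ℕ → E be a bounded error sequence with ‖e(k)‖ → 0 as k → ∞, and define a sequence (x(k)) by x(k+1) = x(k) + α(k)·(∇f(x(k)) + e(k)). Then liminf_{k→∞} ‖∇f(x(k))‖ = 0. -/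

import Mathlib

/-!
Along the iteration, `f (x k)` grows by at least `α k ⟪∇f, ∇f + e⟫ - (L/2) α k² ‖∇f + e‖²`
(the quadratic lower bound for functions with `L`-Lipschitz gradient). If `‖∇f (x k)‖` stayed
above some `ε > 0`, then once `‖e k‖ < ε/2` the gain would be at least `(ε²/2) α k` up to an
error `O(α k²)`; since `Σ α k = ∞` and `Σ α k² < ∞`, `f (x k)` would tend to `+∞`, contradicting
that `f` is bounded above.
-/

open Filter Finset
open scoped RealInnerProductSpace

section GradientLipschitz

variable {E : Type*} [NormedAddCommGroup E] [InnerProductSpace ℝ E] [CompleteSpace E]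
  {f : E → ℝ}

theorem Differentiable.hasDerivAt_apply_add_smul (hf : Differentiable ℝ f) (a v : E) (t : ℝ) :
    HasDerivAt (fun s : ℝ => f (a + s • v)) ⟪gradient f (a + t • v), v⟫ t := by
  have hline : HasDerivAt (fun s : ℝ => a + s • v) v t := by
    simpa using ((hasDerivAt_id t).smul_const v).const_add a
  rw [inner_gradient_left]
  exact (hf _).hasFDerivAt.comp_hasDerivAt t hline

theorem add_inner_gradient_sub_le_apply_add (hf : Differentiable ℝ f) {L : ℝ}
    (hLip : ∀ a b : E, ‖gradient f a - gradient f b‖ ≤ L * ‖a - b‖) (a v : E) :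
    f a + ⟪gradient f a, v⟫ - L / 2 * ‖v‖ ^ 2 ≤ f (a + v) := by
  let φ : ℝ → ℝ := fun t => f (a + t • v) - t * ⟪gradient f a, v⟫ + L / 2 * t ^ 2 * ‖v‖ ^ 2
  have hφ : ∀ t, HasDerivAt φ
      (⟪gradient f (a + t • v), v⟫ - ⟪gradient f a, v⟫ + L * t * ‖v‖ ^ 2) t := by
    intro t
    refine (((hf.hasDerivAt_apply_add_smul a v t).sub
      ((hasDerivAt_id t).mul_const _)).add
      (((hasDerivAt_pow 2 t).const_mul (L / 2)).mul_const (‖v‖ ^ 2))).congr_deriv ?_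
    norm_num only [Nat.cast_ofNat, one_mul]
    ring
  have hφ'_nonneg : ∀ t ∈ interior (Set.Icc (0 : ℝ) 1),
      0 ≤ ⟪gradient f (a + t • v), v⟫ - ⟪gradient f a, v⟫ + L * t * ‖v‖ ^ 2 := by
    intro t ht
    rw [interior_Icc] at ht
    have hbound : |⟪gradient f (a + t • v) - gradient f a, v⟫| ≤ L * t * ‖v‖ ^ 2 := calc
      _ ≤ ‖gradient f (a + t • v) - gradient f a‖ * ‖v‖ := abs_real_inner_le_norm _ _
      _ ≤ L * ‖t • v‖ * ‖v‖ := by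
          gcongr
          simpa using hLip (a + t • v) a
      _ = L * t * ‖v‖ ^ 2 := by
          rw [norm_smul, Real.norm_of_nonneg ht.1.le]
          ring
    rw [← inner_sub_left]
    linarith [neg_abs_le ⟪gradient f (a + t • v) - gradient f a, v⟫]
  have hmono := monotoneOn_of_hasDerivWithinAt_nonneg (convex_Icc 0 1)
    (continuous_iff_continuousAt.2 fun t => (hφ t).continuousAt).continuousOn
    (fun t _ => (hφ t).hasDerivWithinAt) hφ'_nonneg
  have h01 := hmono (Set.left_mem_Icc.2 zero_le_one) (Set.right_mem_Icc.2 zero_le_one) zero_le_one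
  simp only [φ, zero_smul, one_smul, add_zero, zero_mul, sub_zero, one_mul, one_pow, ne_eq,
    OfNat.ofNat_ne_zero, not_false_eq_true, zero_pow, mul_zero, mul_one] at h01
  linarith

theorem le_apply_add_smul_gradient_add (hf : Differentiable ℝ f) {L : ℝ}
    (hLip : ∀ a b : E, ‖gradient f a - gradient f b‖ ≤ L * ‖a - b‖) (a e : E) {t : ℝ}
    (ht : 0 ≤ t) :
    f a + t * (‖gradient f a‖ * (‖gradient f a‖ - ‖e‖)) - L / 2 * t ^ 2 * ‖gradient f a + e‖ ^ 2
      ≤ f (a + t • (gradient f a + e)) := by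
  have hinner : ‖gradient f a‖ * (‖gradient f a‖ - ‖e‖) ≤ ⟪gradient f a, gradient f a + e⟫ := by
    rw [inner_add_right, real_inner_self_eq_norm_sq]
    linarith [neg_le_of_abs_le (abs_real_inner_le_norm (gradient f a) e)]
  calc _ ≤ f a + ⟪gradient f a, t • (gradient f a + e)⟫
          - L / 2 * ‖t • (gradient f a + e)‖ ^ 2 := by
        rw [real_inner_smul_right, norm_smul, Real.norm_of_nonneg ht, mul_pow]
        linarith [mul_le_mul_of_nonneg_left hinner ht]
    _ ≤ _ := add_inner_gradient_sub_le_apply_add hf hLip a _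

end GradientLipschitz

theorem tendsto_atTop_of_add_sub_le_succ {y α β : ℕ → ℝ}
    (hα : Tendsto (fun n => ∑ k ∈ range n, α k) atTop atTop) (hβ : Summable β)
    (hstep : ∀ᶠ k in atTop, y k + α k - β k ≤ y (k + 1)) :
    Tendsto y atTop atTop := by
  obtain ⟨N, hN⟩ := eventually_atTop.1 hstep
  have hmono : ∀ n ≥ N,
      y N - ∑ k ∈ range N, (α k - β k) ≤ y n - ∑ k ∈ range n, (α k - β k) := by
    refine Nat.le_induction le_rfl fun n hn ih => ?_
    rw [sum_range_succ]
    linarith [hN n hn]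
  have hlower : Tendsto (fun n => ∑ k ∈ range n, α k +
      (y N - ∑ k ∈ range N, (α k - β k) - ∑ k ∈ range n, β k)) atTop atTop :=
    hα.atTop_add (hβ.tendsto_sum_tsum_nat.const_sub _)
  refine tendsto_atTop_mono' _ ((eventually_ge_atTop N).mono fun n hn => ?_) hlower
  have := hmono n hn
  simp only [sum_sub_distrib] at this ⊢
  linarith

theorem liminf_eq_zero_of_frequently_le {ι : Type*} {l : Filter ι} [l.NeBot] {u : ι → ℝ}
    (h0 : ∀ i, 0 ≤ u i) (h : ∀ ε > 0, ∃ᶠ i in l, u i ≤ ε) : liminf u l = 0 := by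
  have hcobdd : l.IsCoboundedUnder (· ≥ ·) u := by
    refine ⟨1, fun a ha => ?_⟩
    obtain ⟨i, hi1, hai⟩ := ((h 1 one_pos).and_eventually (eventually_map.1 ha)).exists
    exact hai.trans hi1
  refine le_antisymm (le_of_forall_pos_le_add fun ε hε => ?_)
    (le_liminf_of_le hcobdd (.of_forall h0))
  simpa using liminf_le_of_frequently_le (h ε hε) ⟨0, eventually_map.2 (.of_forall h0)⟩

theorem perturbed_gradient_ascent_liminf_grad_zero_general
    {E : Type*} [NormedAddCommGroup E] [InnerProductSpace ℝ E] [FiniteDimensional ℝ E]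
    (f : E → ℝ) (hdiff : Differentiable ℝ f)
    (hbdd : ∃ B : ℝ, ∀ z : E, f z ≤ B)
    (L : ℝ) (hL0 : 0 ≤ L)
    (hLip : ∀ a b : E, ‖gradient f a - gradient f b‖ ≤ L * ‖a - b‖)
    (G : ℝ)
    (hG : ∀ z : E, ‖gradient f z‖ ≤ G)
    (α : ℕ → ℝ) (hαpos : ∀ k, 0 < α k)
    (hαdiv : Filter.Tendsto (fun N => ∑ k ∈ Finset.range N, α k) Filter.atTop Filter.atTop)
    (hα2 : Summable (fun k => (α k) ^ 2))
    (e : ℕ → E) (hebdd : ∃ C : ℝ, ∀ k, ‖e k‖ ≤ C)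
    (he0 : Filter.Tendsto (fun k => ‖e k‖) Filter.atTop (nhds 0))
    (x : ℕ → E)
    (hrec : ∀ k : ℕ, x (k + 1) = x k + α k • (gradient f (x k) + e k)) :
    Filter.liminf (fun k => ‖gradient f (x k)‖) Filter.atTop = 0 := by
  obtain ⟨B, hB⟩ := hbdd
  obtain ⟨C, hC⟩ := hebdd
  have hstep : ∀ k, f (x k) + α k * (‖gradient f (x k)‖ * (‖gradient f (x k)‖ - ‖e k‖))
      - L / 2 * (G + C) ^ 2 * α k ^ 2 ≤ f (x (k + 1)) := by
    intro k
    have hdir : ‖gradient f (x k) + e k‖ ≤ G + C :=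
      (norm_add_le _ _).trans (add_le_add (hG _) (hC k))
    have hquad : L / 2 * α k ^ 2 * ‖gradient f (x k) + e k‖ ^ 2
        ≤ L / 2 * α k ^ 2 * (G + C) ^ 2 := by gcongr
    rw [hrec]
    linarith [le_apply_add_smul_gradient_add hdiff hLip (x k) (e k) (hαpos k).le]
  refine liminf_eq_zero_of_frequently_le (fun k => norm_nonneg _) fun ε hε => ?_
  by_contra hfar
  rw [not_frequently] at hfar
  have hgrowth : Tendsto (fun k => f (x k)) atTop atTop := by
    refine tendsto_atTop_of_add_sub_le_succ (α := fun k => ε * (ε / 2) * α k)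
      (by simpa only [← mul_sum] using hαdiv.const_mul_atTop (by positivity))
      (hα2.mul_left (L / 2 * (G + C) ^ 2)) ?_
    filter_upwards [hfar, he0.eventually (gt_mem_nhds (half_pos hε))] with k hgk hek
    have hgain : ε * (ε / 2) ≤ ‖gradient f (x k)‖ * (‖gradient f (x k)‖ - ‖e k‖) :=
      mul_le_mul (not_le.1 hgk).le (by linarith [not_le.1 hgk]) (by positivity) (norm_nonneg _)
    nlinarith [hstep k, mul_le_mul_of_nonneg_left hgain (hαpos k).le]
  obtain ⟨k, hk⟩ := (hgrowth.eventually_gt_atTop B).exists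
  exact (hB _).not_gt hk

/-- **Perturbed gradient ascent with stochastic-approximation step sizes
(mechanism behind Theorem 1 / Remark 2 of the paper).**
Let `E` be a finite-dimensional real inner product space and `f : E → ℝ` differentiable,
bounded above, with `L`-Lipschitz and uniformly bounded gradient.  Let `α k > 0` with
`Σ α k = ∞` and `Σ (α k)² < ∞`, and let `e` be a bounded error sequence with
`‖e k‖ → 0`.  If `x (k+1) = x k + α k • (∇f (x k) + e k)`, then
`liminf_k ‖∇f (x k)‖ = 0`. -/
theorem perturbed_gradient_ascent_liminf_grad_zero
    {E : Type*} [NormedAddCommGroup E] [InnerProductSpace ℝ E] [FiniteDimensional ℝ E]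
    (f : E → ℝ) (hdiff : Differentiable ℝ f)
    (hbdd : ∃ B : ℝ, ∀ z : E, f z ≤ B)
    (L : ℝ) (hL0 : 0 ≤ L)
    (hLip : ∀ a b : E, ‖gradient f a - gradient f b‖ ≤ L * ‖a - b‖)
    (G : ℝ) (hG0 : 0 ≤ G)
    (hG : ∀ z : E, ‖gradient f z‖ ≤ G)
    (α : ℕ → ℝ) (hαpos : ∀ k, 0 < α k)
    (hαdiv : Filter.Tendsto (fun N => ∑ k ∈ Finset.range N, α k) Filter.atTop Filter.atTop)
    (hα2 : Summable (fun k => (α k) ^ 2))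
    (e : ℕ → E) (hebdd : ∃ C : ℝ, ∀ k, ‖e k‖ ≤ C)
    (he0 : Filter.Tendsto (fun k => ‖e k‖) Filter.atTop (nhds 0))
    (x : ℕ → E)
    (hrec : ∀ k : ℕ, x (k + 1) = x k + α k • (gradient f (x k) + e k)) :
    Filter.liminf (fun k => ‖gradient f (x k)‖) Filter.atTop = 0 :=
  perturbed_gradient_ascent_liminf_grad_zero_general f hdiff hbdd L hL0 hLip G hG α hαpos hαdiv hα2
    e hebdd he0 x hrec
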